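/- arXiv:2507.10946 — 7 statements merged into one kernel-verified Lean document; each statement's English description precedes it below -/
import Mathlib

section
/- Let d, n be positive integers, let a_1, …, a_n be nonzero vectors in ℝ^d, and let 0 < ρ₀ ≤ 1. Suppose there exists x ∈ ℝ^d with ‖x‖₂ ≤ 1 and ⟨a_i, x⟩ ≥ ρ₀·‖a_i‖₂ for every i. Let P = {y ∈ ℝ^d : ⟨a_i, y⟩ ≥ 0 for all i} and let B be the closed unit ball in ℝ^d. Then vol(P ∩ B) ≥ (ρ₀/2)^d · vol(B), where vol denotes d-dimensional Lebesgue measure. (Quantitative form of Lemma 3 of Soheili–Peña: if the margin of the homogeneous LP Ax ≥ 0 is at least ρ₀, then vol(P ∩ B) = Ω(ρ₀^d)·vol(B).) -/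
open MeasureTheory
open scoped RealInnerProductSpace

/-- Quantitative form of Lemma 3 of Soheili–Peña: a margin of `ρ₀` for the homogeneous
LP `Ax ≥ 0` implies that the feasible cone occupies at least a `(ρ₀/2)^d` fraction of
the unit ball. -/
theorem stmt_2 (d n : ℕ) (hd : 0 < d) (hn : 0 < n)
    (a : Fin n → EuclideanSpace ℝ (Fin d)) (ha : ∀ i, a i ≠ 0)
    (ρ₀ : ℝ) (hρ0 : 0 < ρ₀) (hρ1 : ρ₀ ≤ 1)
    (x : EuclideanSpace ℝ (Fin d)) (hx : ‖x‖ ≤ 1)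
    (hmargin : ∀ i, ρ₀ * ‖a i‖ ≤ ⟪a i, x⟫) :
    ENNReal.ofReal ((ρ₀ / 2) ^ d) *
        volume (Metric.closedBall (0 : EuclideanSpace ℝ (Fin d)) 1)
      ≤ volume ({y : EuclideanSpace ℝ (Fin d) | ∀ i, 0 ≤ ⟪a i, y⟫} ∩
          Metric.closedBall 0 1) := by
  set c : EuclideanSpace ℝ (Fin d) := (2:ℝ)⁻¹ • x with hc
  have hsub : Metric.closedBall c (ρ₀ / 2) ⊆
      {y : EuclideanSpace ℝ (Fin d) | ∀ i, 0 ≤ ⟪a i, y⟫} ∩ Metric.closedBall 0 1 := by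
    intro y hy
    rw [Metric.mem_closedBall, dist_eq_norm] at hy
    constructor
    · intro i
      have h1 : ⟪a i, y⟫ = ⟪a i, c⟫ + ⟪a i, y - c⟫ := by
        rw [inner_sub_right]; ring
      have h2 : ⟪a i, c⟫ = (2:ℝ)⁻¹ * ⟪a i, x⟫ := by
        rw [hc, inner_smul_right]
      have h3 : |⟪a i, y - c⟫| ≤ ‖a i‖ * (ρ₀ / 2) := by
        calc |⟪a i, y - c⟫| ≤ ‖a i‖ * ‖y - c‖ := abs_real_inner_le_norm _ _
          _ ≤ ‖a i‖ * (ρ₀ / 2) := by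
            exact mul_le_mul_of_nonneg_left hy (norm_nonneg _)
      have h4 := hmargin i
      have := neg_abs_le ⟪a i, y - c⟫
      nlinarith [norm_nonneg (a i)]
    · have : ‖y‖ ≤ ‖c‖ + ρ₀ / 2 := by
        calc ‖y‖ = ‖c + (y - c)‖ := by rw [add_sub_cancel]
          _ ≤ ‖c‖ + ‖y - c‖ := norm_add_le _ _
          _ ≤ ‖c‖ + ρ₀ / 2 := by linarith
      have hcn : ‖c‖ ≤ 1 / 2 := by
        rw [hc, norm_smul]
        simp only [norm_inv, Real.norm_ofNat]
        nlinarith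
      simp only [Metric.mem_closedBall, dist_zero_right]
      linarith
  have hvol : volume (Metric.closedBall c (ρ₀ / 2)) =
      ENNReal.ofReal ((ρ₀ / 2) ^ d) *
        volume (Metric.closedBall (0 : EuclideanSpace ℝ (Fin d)) 1) := by
    haveI : Nontrivial (EuclideanSpace ℝ (Fin d)) :=
      Module.nontrivial_of_finrank_pos (R := ℝ) (by simp [finrank_euclideanSpace]; omega)
    rw [Measure.addHaar_closedBall volume c (by positivity : (0:ℝ) ≤ ρ₀ / 2),
      ← Measure.addHaar_closedBall_eq_addHaar_ball]
    simp
  calc ENNReal.ofReal ((ρ₀ / 2) ^ d) *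
        volume (Metric.closedBall (0 : EuclideanSpace ℝ (Fin d)) 1)
      = volume (Metric.closedBall c (ρ₀ / 2)) := hvol.symm
    _ ≤ _ := measure_mono hsub
end

section
/- Let a_1, …, a_n be nonzero vectors in ℝ^d, let 0 < ρ₀ ≤ 1, and suppose x ∈ ℝ^d satisfies ‖x‖₂ ≤ 1 and ⟨a_i, x⟩ ≥ ρ₀·‖a_i‖₂ for every i. Then the closed Euclidean ball of radius ρ₀/(1+ρ₀) centered at x/(1+ρ₀) is contained in P ∩ B, i.e., every y with ‖y − x/(1+ρ₀)‖₂ ≤ ρ₀/(1+ρ₀) satisfies ‖y‖₂ ≤ 1 and ⟨a_i, y⟩ ≥ 0 for all i. (Geometric core of the volume lower bound: a margin of ρ₀ yields a ball of radius Ω(ρ₀) inside the intersection of the feasible cone and the unit ball.) -/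
open scoped RealInnerProductSpace

/-- Geometric core of the volume lower bound: a margin of `ρ₀` yields a ball of radius
`ρ₀/(1+ρ₀)` centered at `x/(1+ρ₀)` inside the intersection of the feasible cone and
the unit ball. -/
theorem stmt_3 (d n : ℕ) (a : Fin n → EuclideanSpace ℝ (Fin d)) (ha : ∀ i, a i ≠ 0)
    (ρ₀ : ℝ) (hρ0 : 0 < ρ₀) (hρ1 : ρ₀ ≤ 1)
    (x : EuclideanSpace ℝ (Fin d)) (hx : ‖x‖ ≤ 1)
    (hmargin : ∀ i, ρ₀ * ‖a i‖ ≤ ⟪a i, x⟫) :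
    ∀ y : EuclideanSpace ℝ (Fin d), ‖y - (1 / (1 + ρ₀)) • x‖ ≤ ρ₀ / (1 + ρ₀) →
      ‖y‖ ≤ 1 ∧ ∀ i, 0 ≤ ⟪a i, y⟫ := by
  intro y hy
  have hpos : 0 < 1 + ρ₀ := by linarith
  constructor
  · have h1 : ‖y‖ ≤ ‖y - (1 / (1 + ρ₀)) • x‖ + ‖(1 / (1 + ρ₀)) • x‖ := by
      simpa using norm_add_le (y - (1 / (1 + ρ₀)) • x) ((1 / (1 + ρ₀)) • x)
    have h2 : ‖(1 / (1 + ρ₀)) • x‖ ≤ 1 / (1 + ρ₀) := by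
      rw [norm_smul, Real.norm_eq_abs, abs_of_pos (by positivity : (0:ℝ) < 1 / (1 + ρ₀))]
      nlinarith [norm_nonneg x, (by positivity : (0:ℝ) < 1 / (1 + ρ₀))]
    have : ρ₀ / (1 + ρ₀) + 1 / (1 + ρ₀) = 1 := by field_simp; ring
    linarith
  · intro i
    have hcs : |⟪a i, y - (1 / (1 + ρ₀)) • x⟫| ≤ ‖a i‖ * ‖y - (1 / (1 + ρ₀)) • x‖ :=
      abs_real_inner_le_norm _ _
    have h1 : ⟪a i, y - (1 / (1 + ρ₀)) • x⟫ ≥ -(‖a i‖ * (ρ₀ / (1 + ρ₀))) := by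
      have := neg_abs_le ⟪a i, y - (1 / (1 + ρ₀)) • x⟫
      have h2 : ‖a i‖ * ‖y - (1 / (1 + ρ₀)) • x‖ ≤ ‖a i‖ * (ρ₀ / (1 + ρ₀)) :=
        mul_le_mul_of_nonneg_left hy (norm_nonneg _)
      linarith
    have hexp : ⟪a i, y⟫ = ⟪a i, y - (1 / (1 + ρ₀)) • x⟫ + (1 / (1 + ρ₀)) * ⟪a i, x⟫ := by
      rw [inner_sub_right, real_inner_smul_right]; ring
    have hmx := hmargin i
    have hkey : (1 / (1 + ρ₀)) * ⟪a i, x⟫ ≥ ‖a i‖ * (ρ₀ / (1 + ρ₀)) := by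
      rw [ge_iff_le, mul_div_assoc', one_div, inv_mul_eq_div, div_le_div_iff₀ hpos hpos]
      nlinarith
    linarith
end

section
/- Let d ≥ 1 and T ≥ 10⁶·d² be integers, let a_1, …, a_n be unit vectors in ℝ^d, and let λ ∈ ℝ^n with λ_i ≥ 0 for all i. Suppose ‖Σ_{i=1}^n λ_i·a_i‖₂ ≤ 11/√T. Let P ⊆ {1,…,n}, set w = Σ_{i∈P} λ_i·a_i, and suppose ‖w‖₂ ≥ 1/(4√(πd)). Let γ ∈ ℝ^d with ‖γ‖₂ ≤ 1/(16·√π·d) and set ĉ = w + γ. Then ‖ĉ‖₂ ≥ 3/(16√(πd)), and for every x ∈ ℝ^d with ‖x‖₂ ≤ 1 and ⟨a_i, x⟩ ≥ 0 for all i ∈ {1,…,n}, it holds that ⟨ĉ, x⟩ ≤ (2/(3√d))·‖ĉ‖₂. (Deterministic core of Claim boosting: when the weighted sum of all rows is small and the noisy weighted sum of the rows satisfied by the Gaussian vector is large, the noisy sum is a valid rescaling direction.) -/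
open Finset
open scoped RealInnerProductSpace

set_option maxHeartbeats 1000000

/-- Deterministic core of the boosting claim: when the weighted sum of all rows is
small (`≤ 11/√T` with `T ≥ 10⁶ d²`) and the noisy weighted sum `ĉ = w + γ` of the rows
satisfied by the Gaussian vector is large, then `ĉ` is a valid rescaling direction. -/
theorem stmt_6 (d T n : ℕ) (hd : 1 ≤ d) (hT : 1000000 * d ^ 2 ≤ T)
    (a : Fin n → EuclideanSpace ℝ (Fin d)) (ha : ∀ i, ‖a i‖ = 1)
    (lam : Fin n → ℝ) (hnn : ∀ i, 0 ≤ lam i)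
    (hfull : ‖∑ i, lam i • a i‖ ≤ 11 / Real.sqrt T)
    (P : Finset (Fin n)) (w : EuclideanSpace ℝ (Fin d))
    (hw : w = ∑ i ∈ P, lam i • a i)
    (hwlb : 1 / (4 * Real.sqrt (Real.pi * d)) ≤ ‖w‖)
    (γ : EuclideanSpace ℝ (Fin d)) (hγ : ‖γ‖ ≤ 1 / (16 * Real.sqrt Real.pi * d)) :
    3 / (16 * Real.sqrt (Real.pi * d)) ≤ ‖w + γ‖ ∧
      ∀ x : EuclideanSpace ℝ (Fin d), ‖x‖ ≤ 1 → (∀ i, 0 ≤ ⟪a i, x⟫) →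
        ⟪w + γ, x⟫ ≤ (2 / (3 * Real.sqrt d)) * ‖w + γ‖ := by
  have hd1 : (1:ℝ) ≤ (d:ℝ) := by exact_mod_cast hd
  have hdpos : (0:ℝ) < d := by linarith
  set sπ := Real.sqrt Real.pi with hsπ
  set sd := Real.sqrt d with hsd
  have hsπpos : 0 < sπ := Real.sqrt_pos.mpr Real.pi_pos
  have hsπle2 : sπ ≤ 2 := by
    rw [hsπ, show (2:ℝ) = Real.sqrt 4 by
      rw [show (4:ℝ) = 2^2 by norm_num, Real.sqrt_sq (by norm_num)]]
    exact Real.sqrt_le_sqrt (by linarith [Real.pi_le_four])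
  have hsd1 : 1 ≤ sd := Real.one_le_sqrt.mpr hd1
  have hsd2 : sd * sd = d := Real.mul_self_sqrt hdpos.le
  have hsdle : sd ≤ d := by nlinarith
  have hsplit : Real.sqrt (Real.pi * d) = sπ * sd := Real.sqrt_mul Real.pi_pos.le _
  have hsπsdpos : 0 < sπ * sd := by positivity
  have hsT : 1000 * (d:ℝ) ≤ Real.sqrt T := by
    have h1 : ((1000 * d : ℝ))^2 ≤ (T:ℝ) := by
      have h0 : ((1000000 * d^2 : ℕ) : ℝ) ≤ (T:ℝ) := by exact_mod_cast hT
      push_cast at h0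
      nlinarith [h0]
    calc 1000 * (d:ℝ) = Real.sqrt ((1000*d)^2) := by
            rw [Real.sqrt_sq (by positivity)]
      _ ≤ Real.sqrt T := Real.sqrt_le_sqrt h1
  have hsTpos : 0 < Real.sqrt T := by linarith
  have hγ' : ‖γ‖ ≤ 1 / (16 * sπ * (d:ℝ)) := hγ
  have hnorm : ‖w‖ - ‖γ‖ ≤ ‖w + γ‖ := by
    have h := norm_add_le (w + γ) (-γ)
    simp only [add_neg_cancel_right, norm_neg] at h
    linarith
  have hγsd : ‖γ‖ ≤ 1 / (16 * (sπ * sd)) := by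
    refine hγ'.trans (one_div_le_one_div_of_le (by positivity) ?_)
    nlinarith
  have hlow : 3 / (16 * (sπ * sd)) ≤ ‖w + γ‖ := by
    have heq : 3 / (16 * (sπ * sd)) = 1 / (4 * (sπ * sd)) - 1 / (16 * (sπ * sd)) := by
      field_simp; ring
    rw [hsplit] at hwlb
    linarith
  constructor
  · rw [hsplit]; linarith
  · intro x hx hposx
    have hwx : ⟪w, x⟫ ≤ ⟪∑ i, lam i • a i, x⟫ := by
      rw [hw, sum_inner, sum_inner]
      refine Finset.sum_le_sum_of_subset_of_nonneg (Finset.subset_univ P) ?_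
      intro i _ _
      rw [real_inner_smul_left]
      exact mul_nonneg (hnn i) (hposx i)
    have hsx : ⟪∑ i, lam i • a i, x⟫ ≤ 11 / Real.sqrt T := by
      calc ⟪∑ i, lam i • a i, x⟫ ≤ ‖∑ i, lam i • a i‖ * ‖x‖ := real_inner_le_norm _ _
        _ ≤ ‖∑ i, lam i • a i‖ * 1 := by
            exact mul_le_mul_of_nonneg_left hx (norm_nonneg _)
        _ ≤ 11 / Real.sqrt T := by linarith
    have hγx : ⟪γ, x⟫ ≤ ‖γ‖ := by
      calc ⟪γ, x⟫ ≤ ‖γ‖ * ‖x‖ := real_inner_le_norm _ _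
        _ ≤ ‖γ‖ * 1 := mul_le_mul_of_nonneg_left hx (norm_nonneg _)
        _ = ‖γ‖ := mul_one _
    have hip : ⟪w + γ, x⟫ = ⟪w, x⟫ + ⟪γ, x⟫ := inner_add_left _ _ _
    have hTsmall : 11 / Real.sqrt T ≤ 11 / (1000 * (d:ℝ)) := by
      apply div_le_div_of_nonneg_left (by norm_num) (by positivity) hsT
    have hLHS : ⟪w + γ, x⟫ ≤ 11 / (1000 * (d:ℝ)) + 1 / (16 * sπ * (d:ℝ)) := by
      rw [hip]; linarith
    have hRHS : 1 / (8 * sπ * (d:ℝ)) ≤ (2 / (3 * sd)) * ‖w + γ‖ := by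
      have h2 : (2 / (3 * sd)) * (3 / (16 * (sπ * sd))) = 1 / (8 * sπ * (d:ℝ)) := by
        rw [← hsd2]; field_simp; ring
      have h3 : (2 / (3 * sd)) * (3 / (16 * (sπ * sd))) ≤ (2 / (3 * sd)) * ‖w + γ‖ :=
        mul_le_mul_of_nonneg_left hlow (by positivity)
      linarith
    refine hLHS.trans (le_trans ?_ hRHS)
    have key : 11 / (1000 * (d:ℝ)) ≤ 1 / (16 * sπ * (d:ℝ)) := by
      rw [div_le_div_iff₀ (by positivity) (by positivity)]
      nlinarith [mul_le_mul_of_nonneg_right hsπle2 hdpos.le]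
    have hsum : 1 / (16 * sπ * (d:ℝ)) + 1 / (16 * sπ * (d:ℝ)) = 1 / (8 * sπ * (d:ℝ)) := by
      field_simp
      ring
    linarith
end

section
/- Let T ≥ 1 be an integer and let x^(1), …, x^(T+1), u^(1), …, u^(T), η^(1), …, η^(T) be vectors in ℝ^d with x^(1) = 0 and x^(t+1) = x^(t) + u^(t) + η^(t) for all 1 ≤ t ≤ T. Suppose that for every 1 ≤ t ≤ T: ‖u^(t)‖₂ ≤ 1, ⟨x^(t), u^(t)⟩ ≤ 0, ‖η^(t)‖₂² ≤ 1, ⟨u^(t), η^(t)⟩ ≤ 1/2, and Σ_{s=1}^t ⟨x^(s), η^(s)⟩ ≤ 40·t. Then ‖x^(t)‖₂ ≤ 10·√t for all 1 ≤ t ≤ T+1. (Deterministic core of Claim solution-length-bound: the perceptron iterates with noisy updates grow at most like the square root of the iteration count.) -/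
open Finset
open scoped RealInnerProductSpace

/-- Deterministic core of the solution-length bound: perceptron iterates with noisy
updates grow at most like the square root of the iteration count. -/
theorem stmt_8 (d T : ℕ) (hT : 1 ≤ T)
    (x u η : ℕ → EuclideanSpace ℝ (Fin d))
    (hx1 : x 1 = 0)
    (hrec : ∀ t, 1 ≤ t → t ≤ T → x (t + 1) = x t + u t + η t)
    (hu : ∀ t, 1 ≤ t → t ≤ T → ‖u t‖ ≤ 1)
    (hxu : ∀ t, 1 ≤ t → t ≤ T → ⟪x t, u t⟫ ≤ 0)
    (hη : ∀ t, 1 ≤ t → t ≤ T → ‖η t‖ ^ 2 ≤ 1)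
    (huη : ∀ t, 1 ≤ t → t ≤ T → ⟪u t, η t⟫ ≤ 1 / 2)
    (hsum : ∀ t, 1 ≤ t → t ≤ T → ∑ s ∈ Finset.Icc 1 t, ⟪x s, η s⟫ ≤ 40 * t) :
    ∀ t, 1 ≤ t → t ≤ T + 1 → ‖x t‖ ≤ 10 * Real.sqrt t := by
  have key : ∀ t, 1 ≤ t → t ≤ T + 1 →
      ‖x t‖ ^ 2 ≤ 3 * ((t - 1 : ℕ) : ℝ) + 2 * ∑ s ∈ Finset.Icc 1 (t - 1), ⟪x s, η s⟫ := by
    intro t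
    induction t with
    | zero => omega
    | succ n ih =>
      intro _ h2
      by_cases hn : n = 0
      · subst hn
        simp [hx1]
      · obtain ⟨m, rfl⟩ : ∃ m, n = m + 1 := ⟨n - 1, by omega⟩
        have hn1 : 1 ≤ m + 1 := by omega
        have hnT : m + 1 ≤ T := by omega
        have hih := ih hn1 (by omega)
        have hrec' := hrec (m + 1) hn1 hnT
        have hexp : ‖x (m + 1 + 1)‖ ^ 2
            = ‖x (m + 1)‖ ^ 2 + 2 * (⟪x (m+1), u (m+1)⟫ + ⟪x (m+1), η (m+1)⟫)
              + (‖u (m+1)‖ ^ 2 + 2 * ⟪u (m+1), η (m+1)⟫ + ‖η (m+1)‖ ^ 2) := by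
          rw [hrec', add_assoc, norm_add_sq_real, norm_add_sq_real, inner_add_right]
        have hu' := hu (m+1) hn1 hnT
        have hu2 : ‖u (m+1)‖ ^ 2 ≤ 1 := by
          have := norm_nonneg (u (m+1))
          nlinarith
        have hxu' := hxu (m+1) hn1 hnT
        have hη' := hη (m+1) hn1 hnT
        have huη' := huη (m+1) hn1 hnT
        have hsumsplit : ∑ s ∈ Finset.Icc 1 (m + 1 + 1 - 1), ⟪x s, η s⟫
            = ∑ s ∈ Finset.Icc 1 (m + 1 - 1), ⟪x s, η s⟫ + ⟪x (m+1), η (m+1)⟫ := by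
          simp only [Nat.add_sub_cancel]
          exact Finset.sum_Icc_succ_top (by omega) _
        rw [hsumsplit]
        have hc : ((m + 1 + 1 - 1 : ℕ) : ℝ) = ((m + 1 - 1 : ℕ) : ℝ) + 1 := by
          push_cast [Nat.add_sub_cancel]
          ring
        rw [hc]
        nlinarith [hih, hexp]
  intro t h1 h2
  have hsq : ‖x t‖ ^ 2 ≤ 100 * (t : ℝ) := by
    have hk := key t h1 h2
    by_cases ht1 : t = 1
    · subst ht1; simp [hx1]
    · have h1' : 1 ≤ t - 1 := by omega
      have h2' : t - 1 ≤ T := by omega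
      have hs := hsum (t - 1) h1' h2'
      have hcast : ((t - 1 : ℕ) : ℝ) ≤ (t : ℝ) := by
        exact_mod_cast Nat.sub_le t 1
      have htpos : (1 : ℝ) ≤ (t : ℝ) := by exact_mod_cast h1
      nlinarith
  have hnn : (0 : ℝ) ≤ 100 * (t : ℝ) := by positivity
  calc ‖x t‖ = Real.sqrt (‖x t‖ ^ 2) := by
        rw [Real.sqrt_sq (norm_nonneg _)]
    _ ≤ Real.sqrt (100 * (t : ℝ)) := Real.sqrt_le_sqrt hsq
    _ = 10 * Real.sqrt t := by
        rw [Real.sqrt_mul (by norm_num), show (100:ℝ) = 10^2 by norm_num,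
          Real.sqrt_sq (by norm_num)]
end

section
/- Let d ≥ 1, σ > 0 and a ≥ 0. If X = (X_1, …, X_d) is a random vector in ℝ^d whose distribution is the product of d independent Gaussian distributions N(0, σ²), then Pr[Σ_{i=1}^d X_i² ≥ σ²·(d + 2√(d·a) + 2a)] ≤ exp(−a). (Tail bound for the chi-squared distribution with d degrees of freedom, used to control the norms of the Gaussian noise vectors.) -/
/-!
Chernoff's method: the sum of squares `S` of `n` independent `N(0, v)` variables has
`E[exp (t S)] = (1 - 2tv)^(-n/2)` for `2tv < 1`, so `P(S ≥ v(n + u)) ≤ exp (-u/2) (1 + u/n)^(n/2)`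
for the optimal `t`. With `u = 2√(na) + 2a` and `x = 2√(na)/n` one has `1 + u/n = 1 + x + x²/2 ≤ exp x`,
so the bound is at most `exp (-u/2 + √(na)) = exp (-a)`.
-/

open MeasureTheory ProbabilityTheory Real
open scoped NNReal

namespace ProbabilityTheory

variable {v : ℝ≥0} {t : ℝ}

lemma gaussianPDFReal_zero_mul_exp_mul_sq (hv : v ≠ 0) (x : ℝ) :
    gaussianPDFReal 0 v x * exp (t * x ^ 2)
      = (√(2 * π * v))⁻¹ * exp (-((1 - 2 * t * v) / (2 * v)) * x ^ 2) := by
  have : (v : ℝ) ≠ 0 := by exact_mod_cast hv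
  rw [gaussianPDFReal, mul_assoc, ← exp_add]
  field_simp
  ring_nf

lemma integrable_exp_mul_sq_gaussianReal (hv : v ≠ 0) (ht : 2 * t * v < 1) :
    Integrable (fun x ↦ exp (t * x ^ 2)) (gaussianReal 0 v) := by
  rw [gaussianReal_of_var_ne_zero _ hv, integrable_withDensity_iff_integrable_smul'
    (measurable_gaussianPDF 0 v) (ae_of_all _ fun _ ↦ gaussianPDF_lt_top)]
  simp_rw [toReal_gaussianPDF, smul_eq_mul, gaussianPDFReal_zero_mul_exp_mul_sq hv]
  have : 0 < (v : ℝ) := by positivity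
  exact (integrable_exp_neg_mul_sq (div_pos (by linarith) (by positivity))).const_mul _

lemma mgf_sq_gaussianReal (hv : v ≠ 0) (ht : 2 * t * v < 1) :
    mgf (fun x ↦ x ^ 2) (gaussianReal 0 v) t = (√(1 - 2 * t * v))⁻¹ := by
  have : 0 < (v : ℝ) := by positivity
  rw [mgf, integral_gaussianReal_eq_integral_smul hv]
  simp_rw [smul_eq_mul, gaussianPDFReal_zero_mul_exp_mul_sq hv]
  rw [integral_const_mul, integral_gaussian, ← sqrt_inv, ← sqrt_mul (by positivity), ← sqrt_inv]
  congr 1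
  have : 1 - 2 * t * v ≠ 0 := by linarith
  field_simp

section Pi

variable {ι E : Type*} [Fintype ι] [MeasurableSpace E] {μ : Measure E} [SigmaFinite μ]

lemma mgf_sum_comp_pi (f : E → ℝ) :
    mgf (fun x : ι → E ↦ ∑ i, f (x i)) (Measure.pi fun _ ↦ μ) t = mgf f μ t ^ Fintype.card ι := by
  simp_rw [mgf, Finset.mul_sum, exp_sum]
  exact integral_fintype_prod_eq_pow (μ := μ) (fun y ↦ exp (t * f y))

lemma integrable_exp_mul_sum_comp_pi {f : E → ℝ} (hf : Integrable (fun y ↦ exp (t * f y)) μ) :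
    Integrable (fun x : ι → E ↦ exp (t * ∑ i, f (x i))) (Measure.pi fun _ ↦ μ) := by
  simp_rw [Finset.mul_sum, exp_sum]
  exact Integrable.fintype_prod fun _ ↦ hf

end Pi

/-- The Chernoff bound at `t = u / (2v(n + u))`, the minimiser of
`exp (-t v (n + u)) (1 - 2tv)^(-n/2)`. -/
lemma measureReal_sum_sq_ge_le {ι : Type*} [Fintype ι] [Nonempty ι] (hv : v ≠ 0) {u : ℝ}
    (hu : 0 ≤ u) :
    (Measure.pi fun _ : ι ↦ gaussianReal 0 v).real
        {x | v * (Fintype.card ι + u) ≤ ∑ i, x i ^ 2}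
      ≤ exp (-(u / 2)) * √(1 + u / Fintype.card ι) ^ Fintype.card ι := by
  set n : ℝ := (Fintype.card ι : ℝ)
  have hn : 0 < n := by simp [n, Fintype.card_pos]
  set t := u / (2 * v * (n + u))
  have h2tv : 1 - 2 * t * v = n / (n + u) := by
    simp only [t]; field_simp; ring
  have ht : 2 * t * v < 1 := by
    have : 0 < n / (n + u) := by positivity
    linarith
  have hch := measure_ge_le_exp_mul_mgf (X := fun x : ι → ℝ ↦ ∑ i, x i ^ 2)
    (μ := Measure.pi fun _ : ι ↦ gaussianReal 0 v) (v * (n + u)) (by positivity : 0 ≤ t)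
    (integrable_exp_mul_sum_comp_pi (integrable_exp_mul_sq_gaussianReal hv ht))
  rw [mgf_sum_comp_pi (fun y ↦ y ^ 2), mgf_sq_gaussianReal hv ht, h2tv, ← sqrt_inv,
    inv_div, add_div, div_self hn.ne'] at hch
  convert hch using 3
  simp only [t]; field_simp

lemma exp_neg_half_mul_sqrt_pow_le_exp_neg {n : ℕ} (hn : 0 < n) {a : ℝ} (ha : 0 ≤ a) :
    exp (-((2 * √(n * a) + 2 * a) / 2)) * √(1 + (2 * √(n * a) + 2 * a) / n) ^ n ≤ exp (-a) := by
  set s := √(n * a)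
  have hn' : (0 : ℝ) < n := by exact_mod_cast hn
  have hs2 : s ^ 2 = n * a := sq_sqrt (by positivity)
  have hbase : 1 + (2 * s + 2 * a) / n ≤ exp (s / n) ^ 2 := by
    rw [← exp_nat_mul]
    convert quadratic_le_exp_of_nonneg (x := 2 * s / n) (by positivity) using 1
    · field_simp
      rw [hs2]; ring
    · push_cast; ring_nf
  have hpow : √(1 + (2 * s + 2 * a) / n) ^ n ≤ exp s := by
    calc _ ≤ exp (s / n) ^ n := by
          gcongr
          exact sqrt_le_iff.mpr ⟨(exp_pos _).le, hbase⟩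
      _ = exp s := by rw [← exp_nat_mul, mul_div_cancel₀ _ hn'.ne']
  calc _ ≤ exp (-((2 * s + 2 * a) / 2)) * exp s := by gcongr
    _ = exp (-a) := by rw [← exp_add]; ring_nf

end ProbabilityTheory

/-- Chi-squared tail bound: if `X` has independent `N(0,σ²)` coordinates in `ℝ^d`,
then `Pr[Σ Xᵢ² ≥ σ²(d + 2√(d·a) + 2a)] ≤ exp(-a)`. -/
theorem stmt_10 (d : ℕ) (hd : 1 ≤ d) (σ a : ℝ) (hσ : 0 < σ) (ha : 0 ≤ a) :
    (Measure.pi fun _ : Fin d => gaussianReal 0 ((σ ^ 2).toNNReal))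
        {x : Fin d → ℝ |
          σ ^ 2 * ((d : ℝ) + 2 * Real.sqrt (d * a) + 2 * a) ≤ ∑ i, x i ^ 2}
      ≤ ENNReal.ofReal (Real.exp (-a)) := by
  have : Nonempty (Fin d) := ⟨⟨0, hd⟩⟩
  have hv : (σ ^ 2).toNNReal ≠ 0 := (Real.toNNReal_pos.mpr (by positivity)).ne'
  have hchernoff := measureReal_sum_sq_ge_le (ι := Fin d) hv (u := 2 * √(d * a) + 2 * a)
    (by positivity)
  rw [Fintype.card_fin, Real.coe_toNNReal _ (by positivity)] at hchernoff
  rw [← ENNReal.ofReal_toReal (measure_ne_top _ _)]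
  refine ENNReal.ofReal_le_ofReal ((le_of_eq ?_).trans
    (hchernoff.trans (exp_neg_half_mul_sqrt_pow_le_exp_neg hd ha)))
  rw [measureReal_def]
  congr 3
  ext x
  simp only [add_assoc]
end

section
/- Let d, n ≥ 1 and U ≥ 1 be integers, let A be an n × d matrix and b an n-dimensional vector, both with integer entries bounded by U in absolute value. If there exists x ∈ ℝ^d with x ≥ 0 (componentwise) and A·x ≤ b (componentwise), then there exists x ∈ ℝ^d with x ≥ 0, A·x ≤ b, and x_i ≤ ((d+1)·U)^(d+1) for every coordinate i. (Bound on a vertex solution via Cramer's rule: every feasible LP with bounded integer data has a feasible point with polynomially-bounded coordinates.) -/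
/-!
Adjoin the constraints `-x ≤ 0` to `A x ≤ b`; the stacked matrix `[A; -I]` has full column rank.
Among the feasible points take one whose set of active (tight) constraints is maximal. If the
active rows had a nonzero common kernel vector `w`, moving along `±w` until a further constraint
becomes tight would enlarge that set, so the active rows have full column rank, and `d` of them
form an invertible integer matrix `B` with `B x = c`. By Cramer's rule `x_j = det B_j / det B`,
where `|det B| ≥ 1` and `|det B_j| ≤ d! U^d` by the Leibniz expansion.
-/

open Matrix Function Finset
open scoped Nat

theorem Matrix.exists_isUnit_submatrix_of_injective_mulVec {K τ σ : Type*} [Field K] [Finite τ]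
    [Fintype σ] [DecidableEq σ] {N : Matrix τ σ K} (hN : Injective N.mulVec) :
    ∃ g : σ → τ, IsUnit (N.submatrix g id) := by
  have hspan : Submodule.span K (Set.range N.row) = ⊤ := by
    refine Submodule.eq_top_of_finrank_eq ?_
    rw [← rank_eq_finrank_span_row, rank, LinearMap.finrank_range_of_inj hN]
  obtain ⟨κ, a, ha, hκspan, hκli⟩ := exists_linearIndependent' K N.row
  have : Finite κ := Finite.of_injective a ha
  have : Fintype κ := Fintype.ofFinite κ
  have hcard : Fintype.card κ = Fintype.card σ := by
    rw [linearIndependent_iff_card_eq_finrank_span.mp hκli, Set.finrank, hκspan, hspan,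
      finrank_top, Module.finrank_fintype_fun_eq_card]
  have e : σ ≃ κ := (Fintype.equivOfCardEq hcard).symm
  exact ⟨a ∘ e, linearIndependent_rows_iff_isUnit.mp (hκli.comp e e.injective)⟩

section Polyhedron

variable {K ι σ : Type*} [Field K] [LinearOrder K] [IsStrictOrderedRing K] [Fintype ι]
  [Fintype σ]

def activeConstraints (M : Matrix ι σ K) (c : ι → K) (x : σ → K) : Set ι :=
  {i | (M *ᵥ x) i = c i}

theorem exists_activeConstraints_ssubset_of_pos {M : Matrix ι σ K} {c : ι → K} {x w : σ → K}
    (hx : M *ᵥ x ≤ c) (hw : ∀ i ∈ activeConstraints M c x, (M *ᵥ w) i = 0) {i₀ : ι}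
    (hi₀ : 0 < (M *ᵥ w) i₀) :
    ∃ y, M *ᵥ y ≤ c ∧ activeConstraints M c x ⊂ activeConstraints M c y := by
  classical
  set I := univ.filter fun i => 0 < (M *ᵥ w) i
  have hI : I.Nonempty := ⟨i₀, by simpa [I] using hi₀⟩
  set ratio := fun i => (c i - (M *ᵥ x) i) / (M *ᵥ w) i
  obtain ⟨i₁, hi₁, ht⟩ := I.exists_mem_eq_inf' hI ratio
  set t := I.inf' hI ratio
  have hi₁pos : 0 < (M *ᵥ w) i₁ := by simpa [I] using hi₁
  have ht0 : 0 ≤ t := ht ▸ div_nonneg (sub_nonneg.2 (hx i₁)) hi₁pos.le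
  have hMy : ∀ i, (M *ᵥ (x + t • w)) i = (M *ᵥ x) i + t * (M *ᵥ w) i := by
    simp [mulVec_add, mulVec_smul]
  refine ⟨x + t • w, fun i => ?_, ?_⟩
  · rw [hMy]
    rcases le_or_gt ((M *ᵥ w) i) 0 with h | h
    · nlinarith [hx i]
    · have := I.inf'_le ratio (by simpa [I] using h : i ∈ I)
      rw [le_div_iff₀ h] at this
      linarith
  · have hsub : activeConstraints M c x ⊆ activeConstraints M c (x + t • w) := fun i hi => by
      simp_all [activeConstraints]
    refine (Set.ssubset_iff_of_subset hsub).2 ⟨i₁, ?_, fun h => hi₁pos.ne' (hw i₁ h)⟩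
    show (M *ᵥ (x + t • w)) i₁ = c i₁
    rw [hMy, ht, div_mul_cancel₀ _ hi₁pos.ne']
    ring

theorem exists_injective_mulVec_activeConstraints {M : Matrix ι σ K} {c : ι → K}
    (hM : Injective M.mulVec) (hfeas : ∃ x, M *ᵥ x ≤ c) :
    ∃ y, M *ᵥ y ≤ c ∧
      Injective (M.submatrix ((↑) : activeConstraints M c y → ι) id).mulVec := by
  obtain ⟨y, hy, hmax⟩ :=
    (InvImage.wf (activeConstraints M c) wellFounded_gt).has_min {x | M *ᵥ x ≤ c} hfeas
  refine ⟨y, hy, (injective_iff_map_eq_zero (M.submatrix _ id).mulVecLin).2 fun w hw => ?_⟩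
  by_contra hw0
  obtain ⟨i, hi⟩ : ∃ i, (M *ᵥ w) i ≠ 0 := by
    by_contra! h
    exact hw0 (hM (by rw [mulVec_zero]; exact funext h))
  have hact : ∀ i ∈ activeConstraints M c y, (M *ᵥ w) i = 0 := fun i hi =>
    congrFun hw ⟨i, hi⟩
  rcases hi.lt_or_gt with hneg | hpos
  · obtain ⟨z, hz, hlt⟩ := exists_activeConstraints_ssubset_of_pos (w := -w) hy
      (by simpa [mulVec_neg] using hact) (by simpa [mulVec_neg] using hneg)
    exact hmax z hz hlt
  · obtain ⟨z, hz, hlt⟩ := exists_activeConstraints_ssubset_of_pos hy hact hpos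
    exact hmax z hz hlt

theorem exists_basic_feasible_solution [DecidableEq σ] {M : Matrix ι σ K} {c : ι → K}
    (hM : Injective M.mulVec) (hfeas : ∃ x, M *ᵥ x ≤ c) :
    ∃ (y : σ → K) (g : σ → ι), M *ᵥ y ≤ c ∧ (∀ p, (M *ᵥ y) (g p) = c (g p)) ∧
      IsUnit (M.submatrix g id) := by
  obtain ⟨y, hy, hinj⟩ := exists_injective_mulVec_activeConstraints hM hfeas
  obtain ⟨g, hg⟩ := exists_isUnit_submatrix_of_injective_mulVec hinj
  exact ⟨y, Subtype.val ∘ g, hy, fun p => (g p).2, hg⟩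

end Polyhedron

section IntegerData

variable {K σ : Type*} [Field K] [LinearOrder K] [IsStrictOrderedRing K] [Fintype σ]
  [DecidableEq σ]

theorem abs_le_of_intCast_mulVec_eq {U : ℕ} {B : Matrix σ σ ℤ} {c : σ → ℤ}
    (hB : ∀ i j, |B i j| ≤ U) (hc : ∀ i, |c i| ≤ U) (hdet : B.det ≠ 0) {y : σ → K}
    (hy : B.map (↑) *ᵥ y = fun i => (c i : K)) (j : σ) :
    |y j| ≤ (Fintype.card σ)! * (U : K) ^ Fintype.card σ := by
  have hcramer : (B.det : K) • y = cramer (B.map (↑)) (fun i => (c i : K)) := by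
    rw [cramer_eq_adjugate_mulVec, ← hy, mulVec_mulVec, adjugate_mul, smul_mulVec,
      one_mulVec, Int.cast_det]
  have hentry : (B.det : K) * y j = (B.updateCol j c).det := by
    rw [Int.cast_det (B.updateCol j c), map_updateCol, ← cramer_apply]
    exact congrFun hcramer j
  have hnum : |(B.updateCol j c).det| ≤ (Fintype.card σ)! * U ^ Fintype.card σ := by
    simpa using det_le (abv := AbsoluteValue.abs) (x := (U : ℤ)) fun p q => by
      rw [updateCol_apply]
      split_ifs
      exacts [hc p, hB p q]
  have hdet1 : (1 : K) ≤ |(B.det : K)| := by exact_mod_cast Int.one_le_abs hdet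
  calc |y j| ≤ |(B.det : K)| * |y j| := le_mul_of_one_le_left (abs_nonneg _) hdet1
    _ = |((B.updateCol j c).det : K)| := by rw [← abs_mul, hentry]
    _ ≤ _ := by exact_mod_cast hnum

theorem exists_mulVec_le_abs_le_of_int {ι : Type*} [Fintype ι] {U : ℕ} {M : Matrix ι σ ℤ}
    {c : ι → ℤ} (hM : ∀ i j, |M i j| ≤ U) (hc : ∀ i, |c i| ≤ U)
    (hinj : Injective (M.map (Int.cast : ℤ → K)).mulVec)
    (hfeas : ∃ x, M.map (↑) *ᵥ x ≤ fun i => (c i : K)) :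
    ∃ y, M.map (↑) *ᵥ y ≤ (fun i => (c i : K)) ∧
      ∀ j, |y j| ≤ (Fintype.card σ)! * (U : K) ^ Fintype.card σ := by
  obtain ⟨y, g, hy, hyg, hunit⟩ := exists_basic_feasible_solution hinj hfeas
  have hdet : (M.submatrix g id).det ≠ 0 := by
    rw [← Int.cast_ne_zero (α := K), Int.cast_det]
    exact ((isUnit_iff_isUnit_det _).mp hunit).ne_zero
  exact ⟨y, hy, abs_le_of_intCast_mulVec_eq (fun i j => hM (g i) j) (fun i => hc (g i)) hdet
    (funext hyg)⟩

end IntegerData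

section NonnegativeOrthant

variable {R m σ : Type*} [DecidableEq σ]

theorem Matrix.fromRows_neg_one_mulVec_le_iff [Fintype σ] [Ring R] [PartialOrder R]
    [IsOrderedRing R] {A : Matrix m σ R} {b : m → R} {x : σ → R} :
    fromRows A (-1 : Matrix σ σ R) *ᵥ x ≤ Sum.elim b 0 ↔ A *ᵥ x ≤ b ∧ 0 ≤ x := by
  simp [neg_mulVec]

theorem Matrix.injective_fromRows_neg_one_mulVec [Fintype σ] [Ring R] (A : Matrix m σ R) :
    Injective (fromRows A (-1 : Matrix σ σ R)).mulVec := fun x y h => by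
  simpa [neg_mulVec] using congrArg (· ∘ Sum.inr) h

theorem Matrix.abs_fromRows_neg_one_le [Ring R] [LinearOrder R] [IsOrderedRing R]
    {A : Matrix m σ R} {U : R} (hA : ∀ i j, |A i j| ≤ U) (hU : 1 ≤ U) :
    ∀ i j, |fromRows A (-1 : Matrix σ σ R) i j| ≤ U := by
  rintro (i | i) j
  · exact hA i j
  · rw [fromRows_apply_inr, neg_apply, one_apply]
    split_ifs <;> simp [hU, zero_le_one.trans hU]

end NonnegativeOrthant

theorem Nat.factorial_mul_pow_le_pow_succ {d U : ℕ} (hU : 1 ≤ U) :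
    d ! * U ^ d ≤ ((d + 1) * U) ^ (d + 1) :=
  calc d ! * U ^ d ≤ (d + 1) ^ (d + 1) * U ^ (d + 1) := by
        gcongr
        · exact (Nat.factorial_le d.le_succ).trans (d + 1).factorial_le_pow
        · exact d.le_succ
    _ = ((d + 1) * U) ^ (d + 1) := (Nat.mul_pow _ _ _).symm

theorem stmt_12_general (d n U : ℕ) (hU : 1 ≤ U)
    (A : Matrix (Fin n) (Fin d) ℝ) (b : Fin n → ℝ)
    (hA : ∀ i j, ∃ z : ℤ, A i j = (z : ℝ) ∧ |z| ≤ (U : ℤ))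
    (hb : ∀ i, ∃ z : ℤ, b i = (z : ℝ) ∧ |z| ≤ (U : ℤ))
    (hfeas : ∃ x : Fin d → ℝ, (∀ j, 0 ≤ x j) ∧ ∀ i, A.mulVec x i ≤ b i) :
    ∃ x : Fin d → ℝ, (∀ j, 0 ≤ x j) ∧ (∀ i, A.mulVec x i ≤ b i) ∧
      ∀ j, x j ≤ (((d : ℝ) + 1) * U) ^ (d + 1) := by
  choose AZ hAZ hAZU using hA
  choose bZ hbZ hbZU using hb
  set MZ : Matrix (Fin n ⊕ Fin d) (Fin d) ℤ := fromRows (of AZ) (-1)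
  set cZ : Fin n ⊕ Fin d → ℤ := Sum.elim bZ 0
  have hM : fromRows A (-1 : Matrix (Fin d) (Fin d) ℝ) = MZ.map (Int.cast : ℤ → ℝ) := by
    ext (i | i) j
    · exact hAZ i j
    · by_cases h : i = j <;> simp [MZ, one_apply, h]
  have hc : Sum.elim b 0 = fun i => (cZ i : ℝ) := by
    ext (i | i)
    · exact hbZ i
    · simp [cZ]
  have hfeasZ : ∃ x, MZ.map (↑) *ᵥ x ≤ fun i => (cZ i : ℝ) := by
    obtain ⟨x, hx0, hxA⟩ := hfeas
    exact ⟨x, hM ▸ hc ▸ fromRows_neg_one_mulVec_le_iff.2 ⟨hxA, hx0⟩⟩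
  obtain ⟨y, hy, hyU⟩ := exists_mulVec_le_abs_le_of_int (M := MZ) (c := cZ)
    (abs_fromRows_neg_one_le hAZU (by exact_mod_cast hU))
    (by rintro (i | i); exacts [hbZU i, by simp [cZ]])
    (hM ▸ injective_fromRows_neg_one_mulVec A) hfeasZ
  rw [← hM, ← hc, fromRows_neg_one_mulVec_le_iff] at hy
  refine ⟨y, hy.2, hy.1, fun j => (le_abs_self _).trans ((hyU j).trans ?_)⟩
  rw [Fintype.card_fin]
  exact_mod_cast Nat.factorial_mul_pow_le_pow_succ hU

/-- Bound on a vertex solution via Cramer's rule: every feasible LP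
`Ax ≤ b, x ≥ 0` with integer data bounded by `U` has a feasible point whose
coordinates are at most `((d+1)U)^(d+1)`. -/
theorem stmt_12 (d n U : ℕ) (hd : 1 ≤ d) (hn : 1 ≤ n) (hU : 1 ≤ U)
    (A : Matrix (Fin n) (Fin d) ℝ) (b : Fin n → ℝ)
    (hA : ∀ i j, ∃ z : ℤ, A i j = (z : ℝ) ∧ |z| ≤ (U : ℤ))
    (hb : ∀ i, ∃ z : ℤ, b i = (z : ℝ) ∧ |z| ≤ (U : ℤ))
    (hfeas : ∃ x : Fin d → ℝ, (∀ j, 0 ≤ x j) ∧ ∀ i, A.mulVec x i ≤ b i) :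
    ∃ x : Fin d → ℝ, (∀ j, 0 ≤ x j) ∧ (∀ i, A.mulVec x i ≤ b i) ∧
      ∀ j, x j ≤ (((d : ℝ) + 1) * U) ^ (d + 1) :=
  stmt_12_general d n U hU A b hA hb hfeas
end

section
/- Let d ≥ 1, m₁, m₂ ≥ 0 and U ≥ 1 be integers. Let A₁ be an m₁ × d matrix, A₂ an m₂ × d matrix, b₁ ∈ ℝ^{m₁}, b₂ ∈ ℝ^{m₂}, all with integer entries bounded by U in absolute value. Let η₂ ∈ ℝ^{m₂} satisfy 0 ≤ (η₂)_j ≤ 1/(2(d+1)·((d+1)U)^(d+1)) for every j. If the system A₁x ≤ b₁, A₂x = b₂ + η₂, x ≥ 0 has a solution x ∈ ℝ^d, then the system A₁x ≤ b₁, A₂x = b₂, x ≥ 0 also has a solution. (Lemma 36 of Kaplan–Mansour–Moran–Stemmer–Tur: sufficiently small nonnegative perturbations of the right-hand sides of equality constraints do not affect feasibility of an integer-data LP.) -/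
/-!
If the unperturbed system `B x ≤ v'` (equalities split into two inequalities, `x ≥ 0` added as
rows `-x ≤ 0`) were infeasible, Farkas' lemma would give `y ≥ 0` with `yᵀB = 0` and
`yᵀv' = -1`. Carathéodory's theorem for cones makes the support of `y` linearly independent, so
at most `d + 1` entries are nonzero, and Cramer's rule on a nonsingular integer minor bounds each
of them by `(d+1)! U^(d+1)`. The perturbation changes `yᵀv'` by at most `1/2`, so `yᵀv < 0`
still, contradicting feasibility of the perturbed system.
-/

open Finset Matrix

theorem Fintype.sum_set_coe_eq_sum {ι M : Type*} [Fintype ι] [AddCommMonoid M] {s : Set ι}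
    [Fintype s] {f : ι → M} (hf : ∀ i ∉ s, f i = 0) : ∑ i : s, f i = ∑ i, f i := by
  rw [Finset.sum_set_coe]
  exact Finset.sum_subset (subset_univ _) fun i _ hi => hf i (by simpa using hi)

section Caratheodory

variable {ι 𝕜 E : Type*} [Fintype ι] [Field 𝕜] [LinearOrder 𝕜] [IsStrictOrderedRing 𝕜]
  [AddCommGroup E] [Module 𝕜 E]

theorem exists_nonneg_sum_smul_eq_support_ssubset {g : ι → E} {y c : ι → 𝕜} (hy : 0 ≤ y)
    (hc : ∑ i, c i • g i = 0) (hcy : Function.support c ⊆ Function.support y) (hc₀ : c ≠ 0) :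
    ∃ y' : ι → 𝕜, 0 ≤ y' ∧ ∑ i, y' i • g i = ∑ i, y i • g i ∧
      Function.support y' ⊂ Function.support y := by
  classical
  obtain ⟨i₀, hi₀⟩ := Function.ne_iff.mp hc₀
  wlog hpos : 0 < c i₀ generalizing c
  · exact this (by simp [neg_smul, sum_neg_distrib, hc]) (by simpa using hcy) (neg_ne_zero.mpr hc₀)
      (by simpa using hi₀) (by simpa using lt_of_le_of_ne (not_lt.mp hpos) hi₀)
  -- the ratio test: `τ` is the largest step along `-c` that keeps `y` nonnegative
  obtain ⟨i₁, hi₁, hmin⟩ := exists_min_image {i | 0 < c i} (fun i => y i / c i)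
    ⟨i₀, by simpa using hpos⟩
  simp only [mem_filter_univ] at hi₁ hmin
  set τ := y i₁ / c i₁
  refine ⟨y - τ • c, fun i => ?_, ?_, ?_⟩
  · have hτ : 0 ≤ τ := div_nonneg (hy i₁) hi₁.le
    rcases lt_or_ge 0 (c i) with hci | hci
    · simpa [sub_nonneg, ← le_div_iff₀ hci] using hmin i hci
    · have : 0 ≤ y i := hy i
      simp only [Pi.sub_apply, Pi.smul_apply, smul_eq_mul, Pi.zero_apply]
      nlinarith
  · simp [sub_smul, sum_sub_distrib, mul_smul, ← smul_sum, hc]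
  · refine Set.ssubset_iff_of_subset (fun i hi => ?_) |>.2 ⟨i₁, hcy hi₁.ne', ?_⟩
    · by_contra h
      have : c i = 0 := by simpa using fun h' => h (hcy h')
      simp_all
    · simp [τ, hi₁.ne']

theorem exists_nonneg_sum_smul_eq_linearIndepOn_support (g : ι → E) {y : ι → 𝕜} (hy : 0 ≤ y) :
    ∃ y' : ι → 𝕜, 0 ≤ y' ∧ ∑ i, y' i • g i = ∑ i, y i • g i ∧
      LinearIndepOn 𝕜 g (Function.support y') := by
  induction hs : Function.support y using WellFoundedLT.induction generalizing y with
  | ind s ih =>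
  by_cases hli : LinearIndepOn 𝕜 g s
  · exact ⟨y, hy, rfl, hs ▸ hli⟩
  obtain ⟨c, hcs, hc, hc₀⟩ := linearDepOn_iff'.mp hli
  obtain ⟨y', hy', hsum', hlt⟩ := exists_nonneg_sum_smul_eq_support_ssubset hy (c := c)
    (by simpa [Finsupp.linearCombination_apply, Finsupp.sum_fintype] using hc)
    (by simpa [hs, Finsupp.fun_support_eq] using (Finsupp.mem_supported _ _).mp hcs)
    (Finsupp.coe_eq_zero.not.mpr hc₀)
  obtain ⟨y'', hy'', hsum'', hli''⟩ := ih _ (hs ▸ hlt) hy' rfl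
  exact ⟨y'', hy'', hsum''.trans hsum', hli''⟩

end Caratheodory

section Cone

variable {ι E : Type*} [Fintype ι]

theorem PointedCone.mem_hull_range_iff [AddCommGroup E] [Module ℝ E] {g : ι → E} {x : E} :
    x ∈ PointedCone.hull ℝ (Set.range g) ↔ ∃ y : ι → ℝ, 0 ≤ y ∧ ∑ i, y i • g i = x := by
  rw [Submodule.mem_span_range_iff_exists_fun]
  constructor
  · rintro ⟨c, rfl⟩
    exact ⟨fun i => c i, fun i => (c i).2, rfl⟩
  · rintro ⟨y, hy, rfl⟩
    exact ⟨fun i => ⟨y i, hy i⟩, rfl⟩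

variable [NormedAddCommGroup E] [NormedSpace ℝ E]

theorem LinearIndependent.isClosed_image_linearCombination_Ici {g : ι → E}
    (hg : LinearIndependent ℝ g) : IsClosed (Fintype.linearCombination ℝ g '' Set.Ici 0) := by
  have hinj := linearIndependent_iff_injective_fintypeLinearCombination.mp hg
  exact ((Fintype.linearCombination ℝ g).isClosedEmbedding_of_injective
    (LinearMap.ker_eq_bot.mpr hinj)).isClosedMap _ isClosed_Ici

theorem PointedCone.isClosed_hull_range (g : ι → E) :
    IsClosed (PointedCone.hull ℝ (Set.range g) : Set E) := by
  classical
  have hunion : (PointedCone.hull ℝ (Set.range g) : Set E) = ⋃ (s : Set ι)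
      (_ : LinearIndepOn ℝ g s), Fintype.linearCombination ℝ (fun i : s => g i) '' Set.Ici 0 := by
    ext x
    simp only [SetLike.mem_coe, Set.mem_iUnion]
    constructor
    · rw [PointedCone.mem_hull_range_iff]
      rintro ⟨y, hy, rfl⟩
      obtain ⟨y', hy', hsum, hli⟩ := exists_nonneg_sum_smul_eq_linearIndepOn_support g hy
      refine ⟨_, hli, fun i => y' i, fun i => hy' i, ?_⟩
      rw [Fintype.linearCombination_apply, ← hsum]
      exact Fintype.sum_set_coe_eq_sum (f := fun i => y' i • g i) fun i hi => by
        simp [Function.notMem_support.mp hi]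
    · rintro ⟨s, -, z, hz, rfl⟩
      exact sum_mem fun i _ =>
        PointedCone.smul_mem _ (hz i) (PointedCone.subset_hull (Set.mem_range_self _))
  rw [hunion]
  exact isClosed_iUnion_of_finite fun s => isClosed_iUnion_of_finite fun hs =>
    hs.isClosed_image_linearCombination_Ici

theorem PointedCone.exists_strongDual_of_notMem_hull_range {g : ι → E} {e : E}
    (he : e ∉ PointedCone.hull ℝ (Set.range g)) :
    ∃ f : StrongDual ℝ E, (∀ i, 0 ≤ f (g i)) ∧ f e < 0 := by
  obtain ⟨f, hf, hfe⟩ := ProperCone.hyperplane_separation_point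
    ⟨PointedCone.hull ℝ (Set.range g), PointedCone.isClosed_hull_range g⟩ he
  exact ⟨f, fun i => hf _ (PointedCone.subset_hull (Set.mem_range_self i)), hfe⟩

end Cone

theorem Matrix.mulVec_eq_sum_smul_col {R k κ : Type*} [CommSemiring R] [Fintype κ]
    (G : Matrix k κ R) (y : κ → R) :
    G *ᵥ y = ∑ j, y j • G.col j := by
  ext r
  simp [mulVec, dotProduct, mul_comm]

theorem Matrix.exists_nonneg_mulVec_eq_or_exists_vecMul_nonneg {k κ : Type*} [Fintype k]
    [DecidableEq k] [Fintype κ] (G : Matrix k κ ℝ) (e : k → ℝ) :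
    (∃ y, 0 ≤ y ∧ G *ᵥ y = e) ∨ ∃ w, 0 ≤ w ᵥ* G ∧ w ⬝ᵥ e < 0 := by
  by_cases he : e ∈ PointedCone.hull ℝ (Set.range G.col)
  · left
    simpa only [← mulVec_eq_sum_smul_col] using PointedCone.mem_hull_range_iff.mp he
  · right
    obtain ⟨f, hf, hfe⟩ := PointedCone.exists_strongDual_of_notMem_hull_range he
    set w : k → ℝ := fun r => f fun j => if r = j then 1 else 0
    have hdot : ∀ x, f x = w ⬝ᵥ x := fun x => by
      rw [dotProduct_comm]
      exact LinearMap.pi_apply_eq_sum_univ (f : (k → ℝ) →ₗ[ℝ] ℝ) x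
    refine ⟨w, fun j => ?_, ?_⟩
    · exact (hdot _).symm.trans_ge (hf j)
    · simpa only [hdot] using hfe

def IntAbsLe (U : ℕ) (x : ℝ) : Prop := ∃ z : ℤ, x = z ∧ |z| ≤ (U : ℤ)

namespace IntAbsLe

variable {U : ℕ} {x : ℝ}

theorem zero : IntAbsLe U 0 := ⟨0, by simp⟩

theorem one (hU : 1 ≤ U) : IntAbsLe U 1 := ⟨1, by simp, by simpa using hU⟩

theorem neg (hx : IntAbsLe U x) : IntAbsLe U (-x) := by
  obtain ⟨z, rfl, hz⟩ := hx
  exact ⟨-z, by simp, by simpa using hz⟩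

theorem one_le_abs (hx : IntAbsLe U x) (h0 : x ≠ 0) : 1 ≤ |x| := by
  obtain ⟨z, rfl, -⟩ := hx
  exact_mod_cast Int.one_le_abs (by exact_mod_cast h0)

theorem abs_le (hx : IntAbsLe U x) : |x| ≤ U := by
  obtain ⟨z, rfl, hz⟩ := hx
  exact_mod_cast hz

theorem det {n : Type*} [Fintype n] [DecidableEq n] {M : Matrix n n ℝ}
    (hM : ∀ i j, IntAbsLe U (M i j)) :
    IntAbsLe ((Fintype.card n).factorial * U ^ Fintype.card n) M.det := by
  choose Z hZ using hM
  have hMZ : M = (Matrix.of Z).map ((↑) : ℤ → ℝ) := by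
    ext i j
    exact (hZ i j).1
  refine ⟨(Matrix.of Z).det, by rw [hMZ, ← Int.cast_det], ?_⟩
  push_cast
  simpa using Matrix.det_le (A := Matrix.of Z) (abv := AbsoluteValue.abs) fun i j => (hZ i j).2

end IntAbsLe

theorem Matrix.abs_le_of_mulVec_eq {n : Type*} [Fintype n] [DecidableEq n] {U : ℕ}
    {M : Matrix n n ℝ} {e z : n → ℝ} (hM : ∀ i j, IntAbsLe U (M i j))
    (he : ∀ i, IntAbsLe U (e i)) (hdet : M.det ≠ 0) (hz : M *ᵥ z = e) (j : n) :
    |z j| ≤ (Fintype.card n).factorial * U ^ Fintype.card n := by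
  have hcramer : M.det * z j = (M.updateCol j e).det := by
    rw [← cramer_apply, ← hz, cramer_eq_adjugate_mulVec, mulVec_mulVec, adjugate_mul,
      smul_mulVec, one_mulVec, Pi.smul_apply, smul_eq_mul]
  have hupd : ∀ i j', IntAbsLe U (M.updateCol j e i j') := fun i j' => by
    rw [updateCol_apply]
    split_ifs
    exacts [he i, hM i j']
  calc |z j| ≤ |M.det| * |z j| :=
        le_mul_of_one_le_left (abs_nonneg _) ((IntAbsLe.det hM).one_le_abs hdet)
    _ = |(M.updateCol j e).det| := by rw [← abs_mul, hcramer]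
    _ ≤ _ := by exact_mod_cast (IntAbsLe.det hupd).abs_le

theorem Matrix.exists_submatrix_det_ne_zero {m n K : Type*} [Field K] [Fintype m] [Fintype n]
    [DecidableEq n] (A : Matrix m n K) (hA : LinearIndependent K A.col) :
    ∃ f : n → m, (A.submatrix f id).det ≠ 0 := by
  have hspan : Submodule.span K (Set.range A.row) = ⊤ := by
    apply Submodule.eq_top_of_finrank_eq
    rw [← rank_eq_finrank_span_row, rank_eq_finrank_span_cols, finrank_span_eq_card hA,
      Module.finrank_fintype_fun_eq_card]
  obtain ⟨κ, a, ha, hspan', hli⟩ := exists_linearIndependent' K A.row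
  have : Finite κ := Finite.of_injective a ha
  let σ := (Module.Basis.mk hli (by rw [hspan', hspan])).indexEquiv (Pi.basisFun K n)
  refine ⟨a ∘ σ.symm, fun h0 => ?_⟩
  have hrows : LinearIndependent K (A.submatrix (a ∘ σ.symm) id).row :=
    hli.comp _ σ.symm.injective
  exact ((isUnit_iff_isUnit_det _).mp (linearIndependent_rows_iff_isUnit.mp hrows)).ne_zero h0

theorem Matrix.exists_bounded_nonneg_mulVec_eq {k κ : Type*} [Fintype k] [Fintype κ] {U : ℕ}
    (hU : 1 ≤ U) {G : Matrix k κ ℝ} {e : k → ℝ} (hG : ∀ i j, IntAbsLe U (G i j))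
    (he : ∀ i, IntAbsLe U (e i)) {y : κ → ℝ} (hy : 0 ≤ y) (hGy : G *ᵥ y = e) :
    ∃ y' : κ → ℝ, 0 ≤ y' ∧ G *ᵥ y' = e ∧ #{j | y' j ≠ 0} ≤ Fintype.card k ∧
      ∀ j, y' j ≤ (Fintype.card k).factorial * U ^ Fintype.card k := by
  classical
  obtain ⟨y', hy', hsum, hli⟩ := exists_nonneg_sum_smul_eq_linearIndepOn_support G.col hy
  rw [← mulVec_eq_sum_smul_col, ← mulVec_eq_sum_smul_col, hGy] at hsum
  set S := Function.support y'
  have hcard : Fintype.card S ≤ Fintype.card k := by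
    simpa using hli.fintype_card_le_finrank
  refine ⟨y', hy', hsum, by simpa [S, Fintype.card_subtype] using hcard, fun j => ?_⟩
  by_cases hj : j ∈ S
  swap
  · rw [Function.notMem_support.mp hj]
    positivity
  -- restricted to the support and to suitable rows, `G y' = e` is a nonsingular square system
  obtain ⟨rows, hrows⟩ := exists_submatrix_det_ne_zero (G.submatrix id ((↑) : S → κ)) hli
  have hsq : G.submatrix rows (↑) *ᵥ (fun j : S => y' j) = fun r => e (rows r) := by
    ext r
    rw [← hsum]
    simp only [mulVec, dotProduct, submatrix_apply]
    exact Fintype.sum_set_coe_eq_sum (f := fun j => G (rows r) j * y' j)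
      fun j hj => by simp [Function.notMem_support.mp hj]
  have hmono : (Fintype.card S).factorial * U ^ Fintype.card S ≤
      (Fintype.card k).factorial * U ^ Fintype.card k :=
    Nat.mul_le_mul (Nat.factorial_le hcard) (Nat.pow_le_pow_right hU hcard)
  calc y' j ≤ |y' j| := le_abs_self _
    _ ≤ (Fintype.card S).factorial * U ^ Fintype.card S :=
      abs_le_of_mulVec_eq (fun _ _ => hG _ _) (fun _ => he _) hrows hsq ⟨j, hj⟩
    _ ≤ _ := by exact_mod_cast hmono

section Perturbation

variable {ι n : Type*} [Fintype n]

theorem Matrix.not_mulVec_le_of_vecMul_eq_zero [Fintype ι] {B : Matrix ι n ℝ} {v y : ι → ℝ}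
    (hy : 0 ≤ y) (hyB : y ᵥ* B = 0) (hyv : y ⬝ᵥ v < 0) (x : n → ℝ) : ¬B *ᵥ x ≤ v := fun h => by
  have := dotProduct_le_dotProduct_of_nonneg_left h hy
  rw [dotProduct_mulVec, hyB, zero_dotProduct] at this
  linarith

theorem Matrix.mulVec_smul_le_of_nonneg {B : Matrix ι n ℝ} {v : ι → ℝ} {w₀ : ℝ} {w : n → ℝ}
    (hw₀ : 0 < w₀) (hw : 0 ≤ B *ᵥ w + w₀ • v) : B *ᵥ (-w₀⁻¹ • w) ≤ v := fun i => by
  have h : -(B *ᵥ w) i ≤ w₀ * v i := by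
    linarith [show 0 ≤ (B *ᵥ w) i + w₀ * v i from hw i]
  calc (B *ᵥ (-w₀⁻¹ • w)) i = w₀⁻¹ * -(B *ᵥ w) i := by simp [mulVec_neg, mulVec_smul]
    _ ≤ w₀⁻¹ * (w₀ * v i) := by gcongr
    _ = v i := by field_simp

theorem dotProduct_le_card_support_mul [Fintype ι] {y u : ι → ℝ} {K δ : ℝ} (hy : 0 ≤ y)
    (hyK : ∀ i, y i ≤ K) (hu : ∀ i, |u i| ≤ δ) : y ⬝ᵥ u ≤ #{i | y i ≠ 0} * (K * δ) := by
  classical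
  calc y ⬝ᵥ u = ∑ i with y i ≠ 0, y i * u i :=
        (sum_filter_of_ne fun i _ h => left_ne_zero_of_mul h).symm
    _ ≤ ∑ i with y i ≠ 0, K * δ := sum_le_sum fun i _ => by
        have hδ : 0 ≤ δ := (abs_nonneg _).trans (hu i)
        calc y i * u i ≤ y i * δ := mul_le_mul_of_nonneg_left ((le_abs_self _).trans (hu i)) (hy i)
          _ ≤ K * δ := mul_le_mul_of_nonneg_right (hyK i) hδ
    _ = _ := by rw [sum_const, nsmul_eq_mul]

/-- In `hδ`, `(d+1)! U^(d+1)` bounds the entries of a basic Farkas certificate for `B x ≤ v'`,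
which has at most `d + 1` nonzero entries. -/
theorem Matrix.exists_mulVec_le_of_abs_sub_le [Fintype ι] {U : ℕ} (hU : 1 ≤ U)
    {B : Matrix ι n ℝ} {v v' : ι → ℝ} {δ : ℝ} (hB : ∀ i j, IntAbsLe U (B i j))
    (hv' : ∀ i, IntAbsLe U (v' i))
    (hδ : (Fintype.card n + 1) *
      ((Fintype.card n + 1).factorial * U ^ (Fintype.card n + 1) * δ) < 1)
    (hvv' : ∀ i, |v i - v' i| ≤ δ) (hv : ∃ x, B *ᵥ x ≤ v) : ∃ x, B *ᵥ x ≤ v' := by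
  classical
  -- generators `(Bᵢ, v'ᵢ)`, target `(0, -1)`: a nonnegative combination reaching it is a
  -- Farkas certificate `y ≥ 0`, `yᵀB = 0`, `yᵀv' = -1` against `B x ≤ v'`
  rcases exists_nonneg_mulVec_eq_or_exists_vecMul_nonneg (fromRows Bᵀ (replicateRow Unit v'))
    (Sum.elim 0 fun _ => -1) with ⟨y, hy, hGy⟩ | ⟨w, hw, hwe⟩
  · exfalso
    obtain ⟨y, hy, hGy, hsupp, hyK⟩ := exists_bounded_nonneg_mulVec_eq hU
      (by rintro (j | _) i <;> simp [hB, hv'])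
      (by rintro (j | _) <;> simp [IntAbsLe.zero, (IntAbsLe.one hU).neg]) hy hGy
    have hyB : y ᵥ* B = 0 := funext fun j => by
      simpa [mulVec_transpose] using congrFun hGy (Sum.inl j)
    have hyv' : y ⬝ᵥ v' = -1 := by
      simpa [replicateRow_mulVec_eq_const, dotProduct_comm] using congrFun hGy (Sum.inr ())
    simp only [Fintype.card_sum, Fintype.card_unit] at hsupp hyK
    have hsmall : y ⬝ᵥ (v - v') < 1 := by
      refine (dotProduct_le_card_support_mul hy hyK (u := v - v') hvv').trans_lt ?_
      have hcard : (#{j | y j ≠ 0} : ℝ) ≤ Fintype.card n + 1 := by exact_mod_cast hsupp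
      rcases le_or_gt 0 ((Fintype.card n + 1).factorial * (U : ℝ) ^ (Fintype.card n + 1) * δ)
        with hP | hP
      · exact (mul_le_mul_of_nonneg_right hcard hP).trans_lt hδ
      · exact (mul_nonpos_of_nonneg_of_nonpos (by positivity) hP.le).trans_lt one_pos
    obtain ⟨x, hx⟩ := hv
    refine not_mulVec_le_of_vecMul_eq_zero hy hyB ?_ x hx
    rw [← sub_add_cancel v v', dotProduct_add, hyv']
    linarith
  · have hw₀ : 0 < w (Sum.inr ()) := by
      simpa [dotProduct, Fintype.sum_sum_type] using hwe
    have hrow : (w ∘ Sum.inr) ᵥ* replicateRow Unit v' = w (Sum.inr ()) • v' := by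
      ext i
      simp [vecMul, dotProduct]
    rw [vecMul_fromRows, vecMul_transpose, hrow] at hw
    exact ⟨_, mulVec_smul_le_of_nonneg hw₀ hw⟩

end Perturbation

theorem Matrix.fromRows_mulVec_le_iff {R m₁ m₂ n : Type*} [CommRing R] [PartialOrder R]
    [IsOrderedRing R] [Fintype n] [DecidableEq n] (A₁ : Matrix m₁ n R) (A₂ : Matrix m₂ n R)
    (b₁ : m₁ → R) (c : m₂ → R) (x : n → R) :
    fromRows A₁ (fromRows A₂ (fromRows (-A₂) (-1 : Matrix n n R))) *ᵥ x ≤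
        Sum.elim b₁ (Sum.elim c (Sum.elim (-c) 0)) ↔
      A₁ *ᵥ x ≤ b₁ ∧ A₂ *ᵥ x = c ∧ 0 ≤ x := by
  simp [neg_mulVec, le_antisymm_iff, and_assoc]

theorem add_one_mul_factorial_mul_pow_mul_lt_one {d U : ℕ} (hU : 1 ≤ U) :
    ((d : ℝ) + 1) * ((d + 1).factorial * (U : ℝ) ^ (d + 1) *
      (1 / (2 * ((d : ℝ) + 1) * (((d : ℝ) + 1) * U) ^ (d + 1)))) < 1 := by
  have hfact : ((d + 1).factorial : ℝ) ≤ ((d : ℝ) + 1) ^ (d + 1) := by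
    exact_mod_cast Nat.factorial_le_pow (d + 1)
  have hU' : (1 : ℝ) ≤ U := by exact_mod_cast hU
  rw [mul_pow]
  field_simp
  nlinarith [pow_pos (show (0 : ℝ) < d + 1 by positivity) (d + 1)]

theorem stmt_13_general (d m₁ m₂ U : ℕ) (hU : 1 ≤ U)
    (A₁ : Matrix (Fin m₁) (Fin d) ℝ) (A₂ : Matrix (Fin m₂) (Fin d) ℝ)
    (b₁ : Fin m₁ → ℝ) (b₂ : Fin m₂ → ℝ)
    (hA₁ : ∀ i j, ∃ z : ℤ, A₁ i j = (z : ℝ) ∧ |z| ≤ (U : ℤ))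
    (hA₂ : ∀ i j, ∃ z : ℤ, A₂ i j = (z : ℝ) ∧ |z| ≤ (U : ℤ))
    (hb₁ : ∀ i, ∃ z : ℤ, b₁ i = (z : ℝ) ∧ |z| ≤ (U : ℤ))
    (hb₂ : ∀ i, ∃ z : ℤ, b₂ i = (z : ℝ) ∧ |z| ≤ (U : ℤ))
    (η₂ : Fin m₂ → ℝ)
    (hη : ∀ j, 0 ≤ η₂ j ∧
      η₂ j ≤ 1 / (2 * ((d : ℝ) + 1) * (((d : ℝ) + 1) * U) ^ (d + 1)))
    (hfeas : ∃ x : Fin d → ℝ, (∀ j, 0 ≤ x j) ∧ (∀ i, A₁.mulVec x i ≤ b₁ i) ∧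
      ∀ i, A₂.mulVec x i = b₂ i + η₂ i) :
    ∃ x : Fin d → ℝ, (∀ j, 0 ≤ x j) ∧ (∀ i, A₁.mulVec x i ≤ b₁ i) ∧
      ∀ i, A₂.mulVec x i = b₂ i := by
  set ε := 1 / (2 * ((d : ℝ) + 1) * (((d : ℝ) + 1) * U) ^ (d + 1))
  have hε : 0 ≤ ε := by positivity
  obtain ⟨x, hx⟩ := exists_mulVec_le_of_abs_sub_le hU
    (B := fromRows A₁ (fromRows A₂ (fromRows (-A₂) (-1 : Matrix (Fin d) (Fin d) ℝ))))
    (v := Sum.elim b₁ (Sum.elim (b₂ + η₂) (Sum.elim (-(b₂ + η₂)) 0)))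
    (v' := Sum.elim b₁ (Sum.elim b₂ (Sum.elim (-b₂) 0))) (δ := ε)
    (by
      rintro (i | i | i | i) j
      · exact hA₁ i j
      · exact hA₂ i j
      · exact IntAbsLe.neg (hA₂ i j)
      · by_cases h : i = j <;> simp [h, IntAbsLe.zero, (IntAbsLe.one hU).neg])
    (by rintro (i | i | i | i); exacts [hb₁ i, hb₂ i, IntAbsLe.neg (hb₂ i), IntAbsLe.zero])
    (by simpa only [Fintype.card_fin] using add_one_mul_factorial_mul_pow_mul_lt_one (d := d) hU)
    (by
      rintro (i | i | i | i)
      · simpa using hε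
      · simpa [abs_of_nonneg (hη i).1] using (hη i).2
      · simpa [abs_of_nonneg (hη i).1] using (hη i).2
      · simpa using hε)
    (by
      obtain ⟨x, hx0, hx1, hx2⟩ := hfeas
      exact ⟨x, (fromRows_mulVec_le_iff _ _ _ _ x).2 ⟨hx1, funext hx2, hx0⟩⟩)
  obtain ⟨hx1, hx2, hx0⟩ := (fromRows_mulVec_le_iff _ _ _ _ x).1 hx
  exact ⟨x, hx0, hx1, congrFun hx2⟩

/-- Lemma 36 of Kaplan–Mansour–Moran–Stemmer–Tur: sufficiently small nonnegative
perturbations of the right-hand sides of the equality constraints do not affect the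
feasibility of an LP with integer data bounded by `U`. -/
theorem stmt_13 (d m₁ m₂ U : ℕ) (hd : 1 ≤ d) (hU : 1 ≤ U)
    (A₁ : Matrix (Fin m₁) (Fin d) ℝ) (A₂ : Matrix (Fin m₂) (Fin d) ℝ)
    (b₁ : Fin m₁ → ℝ) (b₂ : Fin m₂ → ℝ)
    (hA₁ : ∀ i j, ∃ z : ℤ, A₁ i j = (z : ℝ) ∧ |z| ≤ (U : ℤ))
    (hA₂ : ∀ i j, ∃ z : ℤ, A₂ i j = (z : ℝ) ∧ |z| ≤ (U : ℤ))
    (hb₁ : ∀ i, ∃ z : ℤ, b₁ i = (z : ℝ) ∧ |z| ≤ (U : ℤ))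
    (hb₂ : ∀ i, ∃ z : ℤ, b₂ i = (z : ℝ) ∧ |z| ≤ (U : ℤ))
    (η₂ : Fin m₂ → ℝ)
    (hη : ∀ j, 0 ≤ η₂ j ∧
      η₂ j ≤ 1 / (2 * ((d : ℝ) + 1) * (((d : ℝ) + 1) * U) ^ (d + 1)))
    (hfeas : ∃ x : Fin d → ℝ, (∀ j, 0 ≤ x j) ∧ (∀ i, A₁.mulVec x i ≤ b₁ i) ∧
      ∀ i, A₂.mulVec x i = b₂ i + η₂ i) :
    ∃ x : Fin d → ℝ, (∀ j, 0 ≤ x j) ∧ (∀ i, A₁.mulVec x i ≤ b₁ i) ∧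
      ∀ i, A₂.mulVec x i = b₂ i :=
  stmt_13_general d m₁ m₂ U hU A₁ A₂ b₁ b₂ hA₁ hA₂ hb₁ hb₂ η₂ hη hfeas
end
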